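/- Let ℂF : ℂ² → ℂ² be the complexification of Pinchuk's map and let f be the Pinchuk polynomial. Then ℂF restricted to f⁻¹(0) ⊆ ℂ² is a two-to-one map from f⁻¹(0) onto the set {−1, 0} × (ℂ \ {0}): its image is exactly {−1, 0} × (ℂ \ {0}) and every point of the image has exactly two preimages in f⁻¹(0). -/

import Mathlib

noncomputable section

/-- The complex Pinchuk auxiliary polynomial `t = xy - 1`. -/
def cT (x y : ℂ) : ℂ := x * y - 1

/-- The complex Pinchuk auxiliary polynomial `h = t(xt + 1)`. -/
def cH (x y : ℂ) : ℂ := cT x y * (x * cT x y + 1)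

/-- The complex Pinchuk auxiliary polynomial `f = (xt+1)^2 (t^2 + y)`. -/
def cF (x y : ℂ) : ℂ := (x * cT x y + 1) ^ 2 * ((cT x y) ^ 2 + y)

/-- The complex Pinchuk polynomial `u(f,h)`. -/
def cU (f h : ℂ) : ℂ :=
  (1/4) * f * (75*f^3 + 300*f^2*h + 450*f*h^2 + 276*f^2 + 828*f*h + 48*h^2 + 364*f + 48*h)

/-- The complexification `ℂF : ℂ² → ℂ²` of Pinchuk's map, given by the same
    polynomials `p = f + h` and `q = -t² - 6th(h+1) + u(f,h)`. -/
def cPinchuk : ℂ × ℂ → ℂ × ℂ := fun v =>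
  (cF v.1 v.2 + cH v.1 v.2,
   -(cT v.1 v.2)^2 - 6 * cT v.1 v.2 * cH v.1 v.2 * (cH v.1 v.2 + 1)
     + cU (cF v.1 v.2) (cH v.1 v.2))

/-- A continuous map `g : X → Y` is *not proper at* `y ∈ Y` if there is no
    neighborhood `U` of `y` such that `g ⁻¹(cl U)` is compact. -/
def NotProperAt {X Y : Type*} [TopologicalSpace X] [TopologicalSpace Y]
    (g : X → Y) (y : Y) : Prop :=
  ¬ ∃ U ∈ nhds y, IsCompact (g ⁻¹' closure U)

/-- The zero set `f⁻¹(0) ⊆ ℂ²` of the Pinchuk polynomial `f`. -/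
def zeroF : Set (ℂ × ℂ) := {v | cF v.1 v.2 = 0}

/-- The set `{-1, 0} × (ℂ \ {0}) ⊆ ℂ²`. -/
def targetSet : Set (ℂ × ℂ) := {w | (w.1 = -1 ∨ w.1 = 0) ∧ w.2 ≠ 0}

/-!
On `f = 0` one of the factors `xt + 1`, `t² + y` of `f` vanishes, which forces `h = 0`, resp.
`h = -1`, and `t ≠ 0`. Since `u(0, h) = 0` and `h(h + 1) = 0`, the map is `ℂF = (h, -t²)` there.
Conversely `(h, t)` determines the point: `x = (h - t) / t²` because `h = xt² + t`, and `y` is read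
off from the vanishing factor. So `(x, y) ↦ (h, t)` is a bijection from `f⁻¹(0)` onto
`{-1, 0} × ℂ*`, and the fibre of `ℂF` over `(h, -s²)` consists of the two points with `t = ±s`.
-/

section ZeroLocus

variable {x y : ℂ}

lemma cF_eq_zero_iff : cF x y = 0 ↔ x * cT x y + 1 = 0 ∨ cT x y ^ 2 + y = 0 := by
  simp only [cF, mul_eq_zero, pow_eq_zero_iff two_ne_zero]

lemma cH_eq_zero_of_mul_cT_add_one_eq_zero (h : x * cT x y + 1 = 0) : cH x y = 0 := by
  rw [cH, h, mul_zero]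

lemma cH_eq_neg_one_of_cT_sq_add_eq_zero (h : cT x y ^ 2 + y = 0) : cH x y = -1 := by
  unfold cH
  unfold cT at h ⊢
  linear_combination x * h

lemma cH_eq_neg_one_or_eq_zero (hf : cF x y = 0) : cH x y = -1 ∨ cH x y = 0 :=
  (cF_eq_zero_iff.1 hf).symm.imp cH_eq_neg_one_of_cT_sq_add_eq_zero
    cH_eq_zero_of_mul_cT_add_one_eq_zero

lemma cT_ne_zero_of_cF_eq_zero (hf : cF x y = 0) : cT x y ≠ 0 := by
  intro ht
  have hy : y = 0 := by simpa [cF, ht] using hf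
  simp [cT, hy] at ht

lemma cPinchuk_of_cF_eq_zero (hf : cF x y = 0) :
    cPinchuk (x, y) = (cH x y, -cT x y ^ 2) := by
  have hh : cH x y * (cH x y + 1) = 0 := by
    rcases cH_eq_neg_one_or_eq_zero hf with h | h <;> simp [h]
  refine Prod.ext (by simp [cPinchuk, hf]) ?_
  simp only [cPinchuk, cU, hf]
  linear_combination (-6 * cT x y) * hh

lemma cPinchuk_mem_targetSet (hf : cF x y = 0) : cPinchuk (x, y) ∈ targetSet := by
  rw [cPinchuk_of_cF_eq_zero hf]
  refine ⟨cH_eq_neg_one_or_eq_zero hf, ?_⟩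
  simpa using cT_ne_zero_of_cF_eq_zero hf

/-- `y` interpolates linearly in `h` between the branch `xt + 1 = 0`, where `h = 0` and
`y = -t - t²`, and the branch `t² + y = 0`, where `h = -1` and `y = -t²`. -/
def zeroFParam (p t : ℂ) : ℂ × ℂ := ((p - t) / t ^ 2, -t ^ 2 - (p + 1) * t)

lemma eq_zeroFParam_of_cF_eq_zero (hf : cF x y = 0) :
    (x, y) = zeroFParam (cH x y) (cT x y) := by
  have ht := cT_ne_zero_of_cF_eq_zero hf
  have ht_def : cT x y = x * y - 1 := rfl
  refine Prod.ext ?_ ?_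
  · simp only [zeroFParam, cH]
    field_simp
    ring
  · simp only [zeroFParam]
    rcases cF_eq_zero_iff.1 hf with h | h
    · rw [cH_eq_zero_of_mul_cT_add_one_eq_zero h]
      linear_combination y * h + cT x y * ht_def
    · rw [cH_eq_neg_one_of_cT_sq_add_eq_zero h]
      linear_combination h

lemma zeroFParam_spec {p t : ℂ} (hp : p = -1 ∨ p = 0) (ht : t ≠ 0) :
    let v := zeroFParam p t
    cF v.1 v.2 = 0 ∧ cH v.1 v.2 = p ∧ cT v.1 v.2 = t := by
  intro v
  have hp' : p * (p + 1) = 0 := by rcases hp with rfl | rfl <;> ring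
  have hx : v.1 = (p - t) / t ^ 2 := rfl
  have hy : v.2 = -t ^ 2 - (p + 1) * t := rfl
  have hT : cT v.1 v.2 = t := by
    rw [cT, hx, hy]
    field_simp
    linear_combination -hp'
  have hxt : v.1 * cT v.1 v.2 + 1 = p / t := by
    rw [hT, hx]
    field_simp
    ring
  refine ⟨?_, ?_, hT⟩
  · rw [cF, hxt, hT, hy]
    field_simp
    linear_combination (-p) * hp'
  · rw [cH, hxt, hT]
    field_simp

lemma setOf_mem_zeroF_cH_cT_eq {p t : ℂ} (hp : p = -1 ∨ p = 0) (ht : t ≠ 0) :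
    {v ∈ zeroF | cH v.1 v.2 = p ∧ cT v.1 v.2 = t} = {zeroFParam p t} := by
  ext v
  rw [Set.mem_singleton_iff]
  constructor
  · rintro ⟨hf, rfl, rfl⟩
    exact eq_zeroFParam_of_cF_eq_zero hf
  · rintro rfl
    exact zeroFParam_spec hp ht

lemma zeroFParam_ne_zeroFParam_neg {p s : ℂ} (hp : p = -1 ∨ p = 0) (hs : s ≠ 0) :
    zeroFParam p s ≠ zeroFParam p (-s) := by
  intro h
  have hT := congrArg (fun v : ℂ × ℂ => cT v.1 v.2) h
  simp only [(zeroFParam_spec hp hs).2.2, (zeroFParam_spec hp (neg_ne_zero.2 hs)).2.2] at hT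
  exact hs (self_eq_neg.1 hT)

lemma fiber_cPinchuk_eq_pair {p s : ℂ} (hp : p = -1 ∨ p = 0) (hs : s ≠ 0) :
    {v ∈ zeroF | cPinchuk v = (p, -s ^ 2)} = {zeroFParam p s, zeroFParam p (-s)} := by
  have hsplit : {v ∈ zeroF | cPinchuk v = (p, -s ^ 2)} =
      {v ∈ zeroF | cH v.1 v.2 = p ∧ cT v.1 v.2 = s} ∪
        {v ∈ zeroF | cH v.1 v.2 = p ∧ cT v.1 v.2 = -s} := by
    ext ⟨x, y⟩
    simp only [Set.mem_union, Set.mem_ofPred_eq, ← and_or_left]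
    refine and_congr_right fun hf => ?_
    rw [cPinchuk_of_cF_eq_zero hf, Prod.mk.injEq, neg_inj, sq_eq_sq_iff_eq_or_eq_neg]
  rw [hsplit, setOf_mem_zeroF_cH_cT_eq hp hs, setOf_mem_zeroF_cH_cT_eq hp (neg_ne_zero.2 hs),
    Set.singleton_union]

end ZeroLocus

/-- The complexified Pinchuk map restricted to `f⁻¹(0)` is a two-to-one map onto
    `{-1, 0} × (ℂ \ {0})`: its image is exactly this set and every point of it has
    exactly two preimages in `f⁻¹(0)`. -/
theorem complex_pinchuk_two_to_one_on_f_zero :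
    cPinchuk '' zeroF = targetSet ∧
    ∀ w ∈ targetSet, ∃ a b : ℂ × ℂ, a ≠ b ∧
      {v ∈ zeroF | cPinchuk v = w} = {a, b} := by
  have fibers : ∀ w ∈ targetSet, ∃ a b : ℂ × ℂ, a ≠ b ∧
      {v ∈ zeroF | cPinchuk v = w} = {a, b} := by
    rintro ⟨p, q⟩ ⟨hp, hq⟩
    obtain ⟨s, hs⟩ := IsAlgClosed.exists_pow_nat_eq (-q) two_pos
    obtain rfl : q = -s ^ 2 := by rw [hs, neg_neg]
    have hs0 : s ≠ 0 := by rintro rfl; simp at hq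
    exact ⟨_, _, zeroFParam_ne_zeroFParam_neg hp hs0, fiber_cPinchuk_eq_pair hp hs0⟩
  refine ⟨Set.Subset.antisymm ?_ fun w hw => ?_, fibers⟩
  · rintro _ ⟨⟨x, y⟩, hf, rfl⟩
    exact cPinchuk_mem_targetSet hf
  · obtain ⟨a, b, -, hab⟩ := fibers w hw
    have ha : a ∈ {v ∈ zeroF | cPinchuk v = w} := hab ▸ Set.mem_insert a {b}
    exact ⟨a, ha⟩
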